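/- arXiv:2206.06454 — 4 statements merged into one kernel-verified Lean document; each statement's English description precedes it below -/
import Mathlib

section
/- Let M be a cyclic G-graded R-module generated by a homogeneous element m with zero annihilator on homogeneous behavior (i.e., (0 :_R m) = (0 :_R M) = 0), and let N be a graded submodule of M. Then gw((N :_R M)) = GW(N); in particular, if N is a graded weakly primal submodule of M, then (N :_R M) is a graded weakly primal ideal of R. -/
variable {G R M : Type*}
variable [AddCommGroup G] [DecidableEq G] [CommRing R] [AddCommGroup M] [Module R M]
variable (𝒜 : G → AddSubgroup R) (ℳ : G → AddSubgroup M)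
variable [GradedRing 𝒜] [DirectSum.Decomposition ℳ] [SetLike.GradedSMul 𝒜 ℳ]

/-- `N` is a graded submodule of the graded module `M`. -/
def IsGradedSubmodule (N : Submodule R M) : Prop :=
  ∀ (i : G) ⦃m : M⦄, m ∈ N → (DirectSum.decompose ℳ m i : M) ∈ N

/-- `GW(N)`: the set of homogeneous elements of `R` that are not graded weakly prime to `N`,
i.e. those `x` with `0 ≠ x • m ∈ N` for some homogeneous `m ∉ N`. -/
def GWN (N : Submodule R M) : Set R :=
  {x | SetLike.IsHomogeneousElem 𝒜 x ∧
    ∃ m : M, SetLike.IsHomogeneousElem ℳ m ∧ m ∉ N ∧ x • m ∈ N ∧ x • m ≠ 0}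

/-- `G(N)`: the set of homogeneous elements of `R` that are not graded prime to `N`. -/
def GN (N : Submodule R M) : Set R :=
  {x | SetLike.IsHomogeneousElem 𝒜 x ∧
    ∃ m : M, SetLike.IsHomogeneousElem ℳ m ∧ m ∉ N ∧ x • m ∈ N}

/-- `gw(P)`: the homogeneous elements of `R` not graded weakly prime to the ideal `P`. -/
def gwI (P : Ideal R) : Set R :=
  {x | SetLike.IsHomogeneousElem 𝒜 x ∧
    ∃ y : R, SetLike.IsHomogeneousElem 𝒜 y ∧ y ∉ P ∧ x * y ∈ P ∧ x * y ≠ 0}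

/-- `N` is a graded weakly primal submodule: `GW(N) ∪ {0}` is (the homogeneous part of)
a graded ideal of `R`. -/
def IsGradedWeaklyPrimal (N : Submodule R M) : Prop :=
  ∃ I : Ideal R, I.IsHomogeneous 𝒜 ∧
    ∀ x : R, SetLike.IsHomogeneousElem 𝒜 x → (x ∈ I ↔ x ∈ GWN 𝒜 ℳ N ∨ x = 0)

/-- `N` is a graded primal submodule: `G(N)` is (the homogeneous part of) a graded ideal. -/
def IsGradedPrimal (N : Submodule R M) : Prop :=
  ∃ I : Ideal R, I.IsHomogeneous 𝒜 ∧
    ∀ x : R, SetLike.IsHomogeneousElem 𝒜 x → (x ∈ I ↔ x ∈ GN 𝒜 ℳ N)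

/-- `P` is a graded weakly primal ideal of `R`. -/
def IsGradedWeaklyPrimalIdeal (P : Ideal R) : Prop :=
  ∃ I : Ideal R, I.IsHomogeneous 𝒜 ∧
    ∀ x : R, SetLike.IsHomogeneousElem 𝒜 x → (x ∈ I ↔ x ∈ gwI 𝒜 P ∨ x = 0)

/-- `N` is a graded `P`-weakly primal submodule: `P` is graded and its homogeneous part
is `GW(N) ∪ {0}`. -/
def IsGPWeaklyPrimal (P : Ideal R) (N : Submodule R M) : Prop :=
  P.IsHomogeneous 𝒜 ∧
    ∀ x : R, SetLike.IsHomogeneousElem 𝒜 x → (x ∈ P ↔ x ∈ GWN 𝒜 ℳ N ∨ x = 0)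

/-- A graded weakly prime ideal of `R`. -/
def IsGradedWeaklyPrimeIdeal (I : Ideal R) : Prop :=
  I.IsHomogeneous 𝒜 ∧
    ∀ x y : R, SetLike.IsHomogeneousElem 𝒜 x → SetLike.IsHomogeneousElem 𝒜 y →
      x * y ∈ I → x * y ≠ 0 → x ∈ I ∨ y ∈ I


/-! Since `M = R • m`, an element `r` lies in `(N :_R M)` iff `r • m ∈ N`, and by faithfulness
`x * y ≠ 0` iff `(x * y) • m ≠ 0`; so `y ↦ y • m` turns witnesses for `gw((N :_R M))` into
witnesses for `GW(N)`. Conversely, a homogeneous `y • m` of degree `i` equals `y' • m`, where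
`y'` is the homogeneous component of `y` of degree `i - deg m`. -/

section

variable {ℳ}

theorem coe_decompose_smul_of_right_mem {g : G} {m : M} (hm : m ∈ ℳ g) (y : R) (i : G) :
    (DirectSum.decompose ℳ (y • m) i : M) = (DirectSum.decompose 𝒜 y (i - g) : R) • m := by
  induction y using DirectSum.Decomposition.inductionOn 𝒜 with
  | zero => simp
  | @homogeneous j y =>
    have hy : (y : R) • m ∈ ℳ (j + g) := SetLike.GradedSMul.smul_mem y.2 hm
    by_cases h : i = j + g
    · subst h
      rw [DirectSum.decompose_of_mem_same ℳ hy, add_sub_cancel_right,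
        DirectSum.decompose_of_mem_same 𝒜 y.2]
    · rw [DirectSum.decompose_of_mem_ne ℳ hy (Ne.symm h),
        DirectSum.decompose_of_mem_ne 𝒜 y.2 (fun hj => h (by rw [hj, sub_add_cancel])),
        zero_smul]
  | add a b ha hb =>
    simp only [add_smul, DirectSum.decompose_add, DirectSum.add_apply, AddSubgroup.coe_add,
      ha, hb]

theorem exists_isHomogeneousElem_smul_eq {m : M} (hm : SetLike.IsHomogeneousElem ℳ m) {y : R}
    (hy : SetLike.IsHomogeneousElem ℳ (y • m)) :
    ∃ y' : R, SetLike.IsHomogeneousElem 𝒜 y' ∧ y' • m = y • m := by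
  obtain ⟨g, hg⟩ := hm
  obtain ⟨i, hi⟩ := hy
  refine ⟨DirectSum.decompose 𝒜 y (i - g), ⟨i - g, SetLike.coe_mem _⟩, ?_⟩
  rw [← coe_decompose_smul_of_right_mem 𝒜 hg, DirectSum.decompose_of_mem_same ℳ hi]

end

theorem Submodule.mem_colon_top_iff_smul_mem {N : Submodule R M} {m : M}
    (hgen : ∀ x : M, ∃ r : R, x = r • m) {r : R} : r ∈ N.colon ⊤ ↔ r • m ∈ N := by
  refine ⟨fun h => Submodule.mem_colon.mp h m trivial, fun h => Submodule.mem_colon.mpr ?_⟩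
  rintro x -
  obtain ⟨s, rfl⟩ := hgen x
  rw [smul_comm]
  exact N.smul_mem s h

section

variable {N : Submodule R M} {m : M} (hgen : ∀ x : M, ∃ r : R, x = r • m)
include hgen

omit [DecidableEq G] [GradedRing 𝒜] [DirectSum.Decomposition ℳ] in
theorem gwI_colon_top_subset_GWN (hm : SetLike.IsHomogeneousElem ℳ m)
    (hfaith : ∀ r : R, r • m = 0 → r = 0) : gwI 𝒜 (N.colon ⊤) ⊆ GWN 𝒜 ℳ N := by
  rintro x ⟨hx, y, ⟨j, hy⟩, hyN, hxyN, hxy⟩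
  obtain ⟨g, hg⟩ := hm
  rw [Submodule.mem_colon_top_iff_smul_mem hgen] at hyN hxyN
  rw [mul_smul] at hxyN
  refine ⟨hx, y • m, ⟨j + g, SetLike.GradedSMul.smul_mem hy hg⟩, hyN, hxyN, ?_⟩
  rw [← mul_smul]
  exact fun h => hxy (hfaith _ h)

theorem GWN_subset_gwI_colon_top (hm : SetLike.IsHomogeneousElem ℳ m) :
    GWN 𝒜 ℳ N ⊆ gwI 𝒜 (N.colon ⊤) := by
  rintro x ⟨hx, m', hm', hm'N, hxm'N, hxm'⟩
  obtain ⟨y, rfl⟩ := hgen m'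
  obtain ⟨y', hy', hy'm⟩ := exists_isHomogeneousElem_smul_eq 𝒜 hm hm'
  refine ⟨hx, y', hy', ?_, ?_, ?_⟩
  · rwa [Submodule.mem_colon_top_iff_smul_mem hgen, hy'm]
  · rwa [Submodule.mem_colon_top_iff_smul_mem hgen, mul_smul, hy'm]
  · intro h
    exact hxm' (by rw [← hy'm, ← mul_smul, h, zero_smul])

end

theorem cyclic_colon_weakly_primal (N : Submodule R M)
    (m : M) (hm : SetLike.IsHomogeneousElem ℳ m)
    (hgen : ∀ x : M, ∃ r : R, x = r • m)
    (hfaith : ∀ r : R, r • m = 0 → r = 0) :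
    gwI 𝒜 (N.colon ⊤) = GWN 𝒜 ℳ N ∧
      (IsGradedWeaklyPrimal 𝒜 ℳ N → IsGradedWeaklyPrimalIdeal 𝒜 (N.colon ⊤)) := by
  have hgw : gwI 𝒜 (N.colon ⊤) = GWN 𝒜 ℳ N :=
    (gwI_colon_top_subset_GWN 𝒜 ℳ hgen hm hfaith).antisymm
      (GWN_subset_gwI_colon_top 𝒜 ℳ hgen hm)
  refine ⟨hgw, ?_⟩
  rintro ⟨I, hI, hIGW⟩
  exact ⟨I, hI, hgw ▸ hIGW⟩
end

section
/- Let M be a G-graded R-module and N a graded weakly primal submodule of M. Then GW(N) ∪ {0} is a graded weakly prime ideal of R; i.e., if x, y ∈ h(R) with 0 ≠ xy ∈ GW(N), then x ∈ GW(N) or y ∈ GW(N). -/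
variable {G R M : Type*}
variable [AddCommGroup G] [DecidableEq G] [CommRing R] [AddCommGroup M] [Module R M]
variable (𝒜 : G → AddSubgroup R) (ℳ : G → AddSubgroup M)
variable [GradedRing 𝒜] [DirectSum.Decomposition ℳ] [SetLike.GradedSMul 𝒜 ℳ]

omit [DecidableEq G] [GradedRing 𝒜] [DirectSum.Decomposition ℳ] in
/-- Either `y • m` already lies in `N`, so `y` witnesses membership with `m`, or it does not,
and then `x` witnesses membership with the homogeneous element `y • m`. -/
theorem mem_GWN_or_mem_GWN_of_mul_mem_GWN {N : Submodule R M} {x y : R}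
    (hx : SetLike.IsHomogeneousElem 𝒜 x) (hy : SetLike.IsHomogeneousElem 𝒜 y)
    (hxy : x * y ∈ GWN 𝒜 ℳ N) : x ∈ GWN 𝒜 ℳ N ∨ y ∈ GWN 𝒜 ℳ N := by
  obtain ⟨-, m, hm, hmN, hxymN, hxym⟩ := hxy
  rw [mul_smul] at hxymN hxym
  by_cases hymN : y • m ∈ N
  · exact Or.inr ⟨hy, m, hm, hmN, hymN, fun hym => hxym (by rw [hym, smul_zero])⟩
  · exact Or.inl ⟨hx, y • m, hy.graded_smul hm, hymN, hxymN, hxym⟩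

omit [DirectSum.Decomposition ℳ] in
theorem IsGPWeaklyPrimal.isGradedWeaklyPrimeIdeal {P : Ideal R} {N : Submodule R M}
    (hP : IsGPWeaklyPrimal 𝒜 ℳ P N) : IsGradedWeaklyPrimeIdeal 𝒜 P := by
  refine ⟨hP.1, fun x y hx hy hxyP hxy0 => ?_⟩
  have hxyN : x * y ∈ GWN 𝒜 ℳ N := ((hP.2 _ (hx.mul hy)).1 hxyP).resolve_right hxy0
  exact (mem_GWN_or_mem_GWN_of_mul_mem_GWN 𝒜 ℳ hx hy hxyN).imp
    (fun h => (hP.2 x hx).2 (Or.inl h)) (fun h => (hP.2 y hy).2 (Or.inl h))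

theorem GWN_weakly_prime (N : Submodule R M) :
    (∀ x y : R, SetLike.IsHomogeneousElem 𝒜 x → SetLike.IsHomogeneousElem 𝒜 y →
        x * y ∈ GWN 𝒜 ℳ N → x * y ≠ 0 → x ∈ GWN 𝒜 ℳ N ∨ y ∈ GWN 𝒜 ℳ N) ∧
      ∀ P : Ideal R, IsGPWeaklyPrimal 𝒜 ℳ P N → IsGradedWeaklyPrimeIdeal 𝒜 P :=
  ⟨fun _ _ hx hy hxy _ => mem_GWN_or_mem_GWN_of_mul_mem_GWN 𝒜 ℳ hx hy hxy,
    fun _ hP => hP.isGradedWeaklyPrimeIdeal⟩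
end

section
/- Let M be a G-graded R-module, S ⊆ h(R) a multiplicatively closed set, and N a graded weakly primal submodule of M with GW(N) ∩ S = ∅. If n ∈ h(M), s ∈ S, and n/s is a nonzero element of the localized submodule N_S ⊆ M_S, then n ∈ N. -/
variable {G R M : Type*}
variable [AddCommGroup G] [DecidableEq G] [CommRing R] [AddCommGroup M] [Module R M]
variable (𝒜 : G → AddSubgroup R) (ℳ : G → AddSubgroup M)
variable [GradedRing 𝒜] [DirectSum.Decomposition ℳ] [SetLike.GradedSMul 𝒜 ℳ]

/-- A homogeneous element of the localized ring `R_S`: a fraction `r/s` with `r` homogeneous. -/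
def HomogLocR (S : Submonoid R) (x : Localization S) : Prop :=
  ∃ (r : R) (s : S), SetLike.IsHomogeneousElem 𝒜 r ∧ x = Localization.mk r s

/-- A homogeneous element of the localized module `M_S`: a fraction `m/s` with `m` homogeneous. -/
def HomogLocM (S : Submonoid R) (x : LocalizedModule S M) : Prop :=
  ∃ (m : M) (s : S), SetLike.IsHomogeneousElem ℳ m ∧ x = LocalizedModule.mk m s

/-- The localization `N_S` of a submodule `N` of `M`, as a submodule of `M_S` over `R_S`. -/
def locSub (S : Submonoid R) (N : Submodule R M) :
    Submodule (Localization S) (LocalizedModule S M) :=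
  Submodule.span (Localization S) (LocalizedModule.mkLinearMap S M '' (N : Set M))

/-- `GW(K)` for a submodule `K` of the localized module `M_S`. -/
def GWNLoc (S : Submonoid R) (K : Submodule (Localization S) (LocalizedModule S M)) :
    Set (Localization S) :=
  {ξ | HomogLocR 𝒜 S ξ ∧
    ∃ μ : LocalizedModule S M, HomogLocM ℳ S μ ∧ μ ∉ K ∧ ξ • μ ∈ K ∧ ξ • μ ≠ 0}

/-- A graded submodule of `M_S`: generated by its homogeneous elements. -/
def IsGradedLocSub (S : Submonoid R) (K : Submodule (Localization S) (LocalizedModule S M)) :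
    Prop :=
  K = Submodule.span (Localization S) {x | x ∈ K ∧ HomogLocM ℳ S x}

/-- A graded ideal of `R_S`: generated by its homogeneous elements. -/
def IsGradedLocIdeal (S : Submonoid R) (P : Ideal (Localization S)) : Prop :=
  P = Ideal.span {x | x ∈ P ∧ HomogLocR 𝒜 S x}

/-- `K` is a graded `P`-weakly primal submodule of `M_S`. -/
def IsGPWeaklyPrimalLoc (S : Submonoid R) (P : Ideal (Localization S))
    (K : Submodule (Localization S) (LocalizedModule S M)) : Prop :=
  IsGradedLocIdeal 𝒜 S P ∧
    ∀ ξ : Localization S, HomogLocR 𝒜 S ξ →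
      (ξ ∈ P ↔ ξ ∈ GWNLoc 𝒜 ℳ S K ∨ ξ = 0)

theorem mem_locSub_iff (S : Submonoid R) (N : Submodule R M) (x : LocalizedModule S M) :
    x ∈ locSub S N ↔ ∃ m ∈ N, ∃ t : S, LocalizedModule.mk m t = x := by
  rw [locSub, ← Submodule.localized'_eq_span (Localization S) S (LocalizedModule.mkLinearMap S M),
    Submodule.mem_localized']
  simp only [IsLocalizedModule.mk_eq_mk']

theorem exists_smul_mem_of_mk_mem_locSub {S : Submonoid R} {N : Submodule R M} {n : M} {s : S}
    (h : LocalizedModule.mk n s ∈ locSub S N) : ∃ c ∈ S, c • n ∈ N := by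
  obtain ⟨m, hm, t, hmt⟩ := (mem_locSub_iff S N _).1 h
  obtain ⟨u, hu⟩ := LocalizedModule.mk_eq.1 hmt
  refine ⟨u * t, S.mul_mem u.2 t.2, ?_⟩
  have hun : ((u : R) * t) • n = ((u : R) * s) • m := by
    simpa only [Submonoid.smul_def, mul_smul] using hu.symm
  rw [hun]
  exact N.smul_mem _ hm

theorem mem_of_mk_mem_locSub (S : Submonoid R) (hS : ∀ s ∈ S, SetLike.IsHomogeneousElem 𝒜 s)
    (N : Submodule R M)
    (hdisj : ∀ s ∈ S, s ∉ GWN 𝒜 ℳ N)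
    (n : M) (hn : SetLike.IsHomogeneousElem ℳ n) (s : S)
    (hmem : LocalizedModule.mk n s ∈ locSub S N)
    (hne : LocalizedModule.mk n s ≠ (0 : LocalizedModule S M)) :
    n ∈ N := by
  obtain ⟨c, hcS, hcn⟩ := exists_smul_mem_of_mk_mem_locSub hmem
  have hcn0 : c • n ≠ 0 := by
    rw [IsLocalizedModule.mk_eq_mk', Ne, IsLocalizedModule.mk'_eq_zero'] at hne
    exact fun h => hne ⟨⟨c, hcS⟩, h⟩
  by_contra hnN
  exact hdisj c hcS ⟨hS c hcS, n, hn, hnN, hcn, hcn0⟩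
end

section
/- Let M = ℤ/24ℤ as a trivially graded ℤ-module (graded by a group G with M_e = M and M_g = 0 for g ≠ e) and N = 8ℤ/24ℤ. Then 2 and 4 are not graded weakly prime to N, but 6 = 2 + 4 is graded weakly prime to N; hence GW(N) is not closed under addition and N is not a graded weakly primal submodule of M. -/
/-- `GW(N)` for the trivially graded `ℤ`-module `ℤ/24ℤ` with `N = 8ℤ/24ℤ` (with the
trivial grading every element is homogeneous). -/
def GWN24 : Set ℤ :=
  {x : ℤ | ∃ m : ZMod 24, m ∉ Submodule.span ℤ {(8 : ZMod 24)} ∧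
    x • m ∈ Submodule.span ℤ {(8 : ZMod 24)} ∧ x • m ≠ 0}

lemma Ideal.mem_of_coe_eq_union_zero {R : Type*} [Semiring R] {I : Ideal R} {S : Set R}
    (hI : (I : Set R) = S ∪ {0}) {a b c : R} (ha : a ∈ S) (hb : b ∈ S) (habc : a + b = c)
    (hc : c ≠ 0) : c ∈ S := by
  have hcI : c ∈ (I : Set R) := habc ▸ I.add_mem (by rw [← SetLike.mem_coe, hI]; exact .inl ha)
    (by rw [← SetLike.mem_coe, hI]; exact .inl hb)
  rw [hI] at hcI
  exact hcI.resolve_right hc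

lemma ZMod.mem_span_int_singleton_iff {n : ℕ} (a m : ZMod n) :
    m ∈ Submodule.span ℤ {a} ↔ ∃ c : ZMod n, c * a = m := by
  rw [← Submodule.restrictScalars_span ℤ (ZMod n) ZMod.intCast_surjective,
    Submodule.restrictScalars_mem]
  exact Ideal.mem_span_singleton'

lemma mem_GWN24_iff (x : ℤ) :
    x ∈ GWN24 ↔ ∃ m : ZMod 24, (¬ ∃ c, c * 8 = m) ∧
      (∃ c, c * 8 = (x : ZMod 24) * m) ∧ (x : ZMod 24) * m ≠ 0 := by
  simp only [GWN24, Set.mem_ofPred_eq, ZMod.mem_span_int_singleton_iff, zsmul_eq_mul]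

lemma two_mem_GWN24 : (2 : ℤ) ∈ GWN24 :=
  (mem_GWN24_iff 2).2 ⟨4, by decide⟩

lemma four_mem_GWN24 : (4 : ℤ) ∈ GWN24 :=
  (mem_GWN24_iff 4).2 ⟨2, by decide⟩

/-- `6 * m ∈ 8ℤ/24ℤ` forces `4 ∣ m`, hence `6 * m = 0`: `6` is weakly prime to `N` vacuously. -/
lemma six_not_mem_GWN24 : (6 : ℤ) ∉ GWN24 := by
  rw [mem_GWN24_iff]
  decide

/-- In the trivially graded `ℤ`-module `ℤ/24ℤ` with `N = 8ℤ/24ℤ`: `2` and `4` are not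
graded weakly prime to `N`, but `6 = 2 + 4` is; hence `GW(N)` is not closed under
addition and `N` is not a graded weakly primal submodule. -/
theorem zmod24_not_weakly_primal :
    (2 : ℤ) ∈ GWN24 ∧ (4 : ℤ) ∈ GWN24 ∧ (6 : ℤ) ∉ GWN24 ∧
      ¬ ∃ I : Ideal ℤ, (I : Set ℤ) = GWN24 ∪ {0} := by
  refine ⟨two_mem_GWN24, four_mem_GWN24, six_not_mem_GWN24, ?_⟩
  rintro ⟨I, hI⟩
  exact six_not_mem_GWN24 <|
    Ideal.mem_of_coe_eq_union_zero hI two_mem_GWN24 four_mem_GWN24 (by norm_num) (by norm_num)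
end
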